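/- arXiv:1901.01879 — 2 statements merged into one kernel-verified Lean document; each statement's English description precedes it below -/
import Mathlib

section
/- Let A = diag(Ni/(N+1), −(i/(N+1)) I_N) ∈ su(N+1), let θ ∈ ℝ and let Θ ∈ ℂ^N be a row vector with Θ̄·Θ = 1, and set ψ = exp(⟦θΘ⟧) ∈ SU(N+1). Then the adjoint orbit point ψ A ψ⁻¹ is given explicitly in block form by: the (1,1) entry is Ni/(N+1) − i sin²θ, the first-row block is −i sin θ cos θ · Θ, the first-column block is −i sin θ cos θ · Θ̄ᵀ, and the lower N×N diagonal block is −(i/(N+1)) I_N + i sin²θ · Θ̄ᵀΘ. (This matrix represents the isometric embedding of ℂP^N ≅ SU(N+1)/U(N) into su(N+1) as the adjoint orbit of A.) -/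
/-!
`K = ⟦Θ⟧` with `Θ̄·Θ = 1` is an infinitesimal rotation of the plane spanned by `e₀` and `(0, Θ̄ᵀ)`:
`K² = -P` for the orthogonal projection `P` onto that plane and `KP = K`, so `K³ = -K`. Splitting
the exponential series into even and odd terms then gives the Rodrigues formula
`exp(θK) = 1 + sin θ K + (1 - cos θ) K²`. Since `A = -(i/(N+1)) 1 + i e₀e₀ᵀ`, conjugating by
`ψ = exp(θK)` gives `ψAψ⁻¹ = -(i/(N+1)) 1 + i (ψe₀)(e₀ᵀψ⁻¹)`, where `ψe₀ = (cos θ, -sin θ Θ̄ᵀ)`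
and `e₀ᵀψ⁻¹ = (cos θ, -sin θ Θ)` are read off from the Rodrigues formula at `±θ`.
-/

open Matrix

/-- The embedding of a row vector `a ∈ ℂ^N` as the su(N+1) matrix
`⟦a⟧ = [[0, a],[−āᵀ, 0]]`. -/
noncomputable def mE {N : ℕ} (a : Fin N → ℂ) :
    Matrix (Fin 1 ⊕ Fin N) (Fin 1 ⊕ Fin N) ℂ :=
  Matrix.fromBlocks 0 (Matrix.of fun _ j => a j)
    (Matrix.of fun i _ => -(starRingEnd ℂ) (a i)) 0

/-- The distinguished element `A = diag(Ni/(N+1), −(i/(N+1)) I_N)` of su(N+1). -/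
noncomputable def Amat (N : ℕ) :
    Matrix (Fin 1 ⊕ Fin N) (Fin 1 ⊕ Fin N) ℂ :=
  Matrix.fromBlocks (Matrix.of fun _ _ => (N : ℂ) * Complex.I / ((N : ℂ) + 1)) 0 0
    ((-Complex.I / ((N : ℂ) + 1)) • (1 : Matrix (Fin N) (Fin N) ℂ))

/-- The Hermitian dot product `ā·b = Σ_k ā_k b_k` on `ℂ^N`. -/
noncomputable def dotc {N : ℕ} (a b : Fin N → ℂ) : ℂ :=
  ∑ k, (starRingEnd ℂ) (a k) * b k

open NormedSpace
open scoped Nat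

section PowThreeEqNeg

variable {A : Type*} [NormedRing A] [NormedAlgebra ℝ A] {K : A}

theorem pow_two_mul_add_one_of_pow_three_eq_neg (hK : K ^ 3 = -K) (n : ℕ) :
    K ^ (2 * n + 1) = (-1 : ℝ) ^ n • K := by
  induction n with
  | zero => simp
  | succ n ih =>
    rw [show 2 * (n + 1) + 1 = 2 + (2 * n + 1) by ring, pow_add, ih, mul_smul_comm,
      ← pow_succ, hK, pow_succ, smul_neg, mul_neg_one, neg_smul]

theorem pow_two_mul_add_two_of_pow_three_eq_neg (hK : K ^ 3 = -K) (n : ℕ) :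
    K ^ (2 * n + 2) = (-1 : ℝ) ^ n • K ^ 2 := by
  rw [pow_succ, pow_two_mul_add_one_of_pow_three_eq_neg hK, smul_mul_assoc, ← pow_two]

theorem inv_factorial_smul_smul_pow (θ : ℝ) (K : A) (n : ℕ) :
    (n !⁻¹ : ℝ) • (θ • K) ^ n = (θ ^ n / n !) • K ^ n := by
  rw [smul_pow, smul_smul, div_eq_inv_mul]

theorem hasSum_expSeries_odd_of_pow_three_eq_neg (hK : K ^ 3 = -K) (θ : ℝ) :
    HasSum (fun n => ((2 * n + 1) !⁻¹ : ℝ) • (θ • K) ^ (2 * n + 1)) (Real.sin θ • K) := by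
  convert (Real.hasSum_sin θ).smul_const K using 2 with n
  rw [inv_factorial_smul_smul_pow, pow_two_mul_add_one_of_pow_three_eq_neg hK, smul_smul]
  ring_nf

theorem hasSum_expSeries_even_of_pow_three_eq_neg (hK : K ^ 3 = -K) (θ : ℝ) :
    HasSum (fun n => ((2 * n) !⁻¹ : ℝ) • (θ • K) ^ (2 * n))
      (1 + (1 - Real.cos θ) • K ^ 2) := by
  have hcos : HasSum (fun n => (-1 : ℝ) ^ (n + 1) * θ ^ (2 * (n + 1)) / (2 * (n + 1))!)
      (Real.cos θ - 1) := by
    simpa using (hasSum_nat_add_iff' 1).mpr (Real.hasSum_cos θ)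
  have htail : HasSum (fun n => ((2 * (n + 1))!⁻¹ : ℝ) • (θ • K) ^ (2 * (n + 1)))
      ((Real.cos θ - 1) • -K ^ 2) := by
    convert hcos.smul_const (-K ^ 2) using 2 with n
    rw [inv_factorial_smul_smul_pow, mul_add_one, pow_two_mul_add_two_of_pow_three_eq_neg hK, smul_smul,
      smul_neg, ← neg_smul]
    ring_nf
  have hsum : 1 + (1 - Real.cos θ) • K ^ 2 = (Real.cos θ - 1) • -K ^ 2 +
      ∑ i ∈ Finset.range 1, ((2 * i)!⁻¹ : ℝ) • (θ • K) ^ (2 * i) := by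
    simp only [Finset.range_one, Finset.sum_singleton, mul_zero, pow_zero, Nat.factorial_zero,
      Nat.cast_one, inv_one, one_smul]
    module
  rw [hsum]
  exact (hasSum_nat_add_iff (f := fun n => ((2 * n)!⁻¹ : ℝ) • (θ • K) ^ (2 * n)) 1).mp htail

theorem exp_smul_of_pow_three_eq_neg [CompleteSpace A] (hK : K ^ 3 = -K) (θ : ℝ) :
    exp (θ • K) = 1 + Real.sin θ • K + (1 - Real.cos θ) • K ^ 2 := by
  rw [show 1 + Real.sin θ • K + (1 - Real.cos θ) • K ^ 2
      = (1 + (1 - Real.cos θ) • K ^ 2) + Real.sin θ • K by abel]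
  exact (exp_series_hasSum_exp' (𝕂 := ℝ) (θ • K)).unique
    (HasSum.even_add_odd (f := fun n => (n !⁻¹ : ℝ) • (θ • K) ^ n)
      (hasSum_expSeries_even_of_pow_three_eq_neg hK θ)
      (hasSum_expSeries_odd_of_pow_three_eq_neg hK θ))

end PowThreeEqNeg

theorem Matrix.mul_single_one_mul {l m n o α : Type*} [Fintype m] [DecidableEq m] [Fintype n]
    [DecidableEq n] [Semiring α] (X : Matrix l m α) (a : m) (b : n) (Y : Matrix n o α) :
    X * single a b (1 : α) * Y = vecMulVec (X.col a) (Y.row b) := by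
  rw [single_eq_single_vecMulVec_single, mul_vecMulVec, vecMulVec_mul, mulVec_single_one,
    single_one_vecMul]

section RotationGenerator

variable {N : ℕ} {Θ : Fin N → ℂ}

noncomputable def planeProj (Θ : Fin N → ℂ) : Matrix (Fin 1 ⊕ Fin N) (Fin 1 ⊕ Fin N) ℂ :=
  fromBlocks 1 0 0 (of fun j k => starRingEnd ℂ (Θ j) * Θ k)

theorem mE_smul (θ : ℝ) (Θ : Fin N → ℂ) : mE (θ • Θ) = θ • mE Θ := by
  ext (i | i) (j | j) <;> simp [mE, Complex.real_smul]

theorem sum_mul_conj_eq_one (hΘ : dotc Θ Θ = 1) : ∑ k, Θ k * starRingEnd ℂ (Θ k) = 1 := by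
  simpa only [dotc, mul_comm] using hΘ

theorem mE_mul_self (hΘ : dotc Θ Θ = 1) : mE Θ * mE Θ = -planeProj Θ := by
  ext (i | i) (j | j) <;>
    simp [mE, planeProj, mul_apply, Fintype.sum_sum_type, one_apply,
      Subsingleton.elim _ (0 : Fin 1), sum_mul_conj_eq_one hΘ]

theorem mE_mul_planeProj (hΘ : dotc Θ Θ = 1) : mE Θ * planeProj Θ = mE Θ := by
  ext (i | i) (j | j) <;>
    simp [mE, planeProj, mul_apply, Fintype.sum_sum_type, one_apply,
      Subsingleton.elim _ (0 : Fin 1)]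
  simp_rw [← mul_assoc, ← Finset.sum_mul, sum_mul_conj_eq_one hΘ, one_mul]

theorem mE_pow_three (hΘ : dotc Θ Θ = 1) : mE Θ ^ 3 = -mE Θ := by
  rw [pow_three, mE_mul_self hΘ, mul_neg, mE_mul_planeProj hΘ]

theorem exp_mE_smul (hΘ : dotc Θ Θ = 1) (θ : ℝ) :
    exp (mE (θ • Θ)) = 1 + Real.sin θ • mE Θ - (1 - Real.cos θ) • planeProj Θ := by
  -- any submultiplicative norm will do: `exp` only depends on the topology
  have hexp := open scoped Matrix.Norms.Operator in
    exp_smul_of_pow_three_eq_neg (mE_pow_three hΘ) θ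
  rw [mE_smul]
  refine hexp.trans ?_
  rw [sq, mE_mul_self hΘ, smul_neg, ← sub_eq_add_neg]

end RotationGenerator

theorem Amat_eq_smul_one_add_smul_single (N : ℕ) : Amat N =
    (-Complex.I / ((N : ℂ) + 1)) • 1 + Complex.I • single (Sum.inl 0) (Sum.inl 0) 1 := by
  ext (i | i) (j | j) <;> simp [Amat, one_apply, Subsingleton.elim _ (0 : Fin 1)]
  field_simp
  ring

theorem mul_Amat_mul_inv {N : ℕ} {ψ : Matrix (Fin 1 ⊕ Fin N) (Fin 1 ⊕ Fin N) ℂ} (hψ : IsUnit ψ) :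
    ψ * Amat N * ψ⁻¹ = (-Complex.I / ((N : ℂ) + 1)) • 1
      + Complex.I • vecMulVec (ψ.col (Sum.inl 0)) (ψ⁻¹.row (Sum.inl 0)) := by
  rw [Amat_eq_smul_one_add_smul_single, ← mul_single_one_mul]
  simp only [mul_add, add_mul, Matrix.mul_smul, Matrix.smul_mul, mul_one,
    mul_nonsing_inv _ ((isUnit_iff_isUnit_det _).mp hψ)]

/-- the adjoint-orbit point `ψ A ψ⁻¹`, with
`ψ = exp(⟦θΘ⟧)`, is the explicit block matrix representing the isometric
embedding of `ℂP^N ≅ SU(N+1)/U(N)` into su(N+1). -/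
theorem su_adjoint_orbit_formula {N : ℕ} (θ : ℝ) (Θ : Fin N → ℂ)
    (hΘ : dotc Θ Θ = 1) :
    NormedSpace.exp (mE (θ • Θ)) * Amat N * (NormedSpace.exp (mE (θ • Θ)))⁻¹
      = Matrix.fromBlocks
          (Matrix.of fun _ _ =>
            (N : ℂ) * Complex.I / ((N : ℂ) + 1)
              - Complex.I * (Real.sin θ : ℂ) ^ 2)
          (Matrix.of fun _ k =>
            -(Complex.I * (Real.sin θ : ℂ) * (Real.cos θ : ℂ)) * Θ k)
          (Matrix.of fun j _ =>
            -(Complex.I * (Real.sin θ : ℂ) * (Real.cos θ : ℂ))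
              * (starRingEnd ℂ) (Θ j))
          ((-Complex.I / ((N : ℂ) + 1)) • (1 : Matrix (Fin N) (Fin N) ℂ)
            + (Complex.I * (Real.sin θ : ℂ) ^ 2) •
                Matrix.of fun j k => (starRingEnd ℂ) (Θ j) * Θ k) := by
  have hψ_inv : (exp (mE (θ • Θ)))⁻¹ = exp (mE ((-θ) • Θ)) := by
    rw [← Matrix.exp_neg, mE_smul, mE_smul, neg_smul]
  rw [mul_Amat_mul_inv (isUnit_exp _), hψ_inv, exp_mE_smul hΘ, exp_mE_smul hΘ]
  ext (i | i) (j | j) <;>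
    simp [mE, planeProj, vecMulVec_apply, one_apply, Subsingleton.elim _ (0 : Fin 1)]
  case inl.inl =>
    field_simp
    linear_combination ((N : ℂ) + 1) * Complex.sin_sq_add_cos_sq (θ : ℂ)
  all_goals ring
end

section
/- Let A = diag(Ni/(N+1), −(i/(N+1)) I_N) ∈ su(N+1) and let 𝐪 : ℝ² → ℂ^N be a smooth row-vector-valued function of (x,t); set q := ⟦𝐪⟧ : ℝ² → su(N+1). Then q satisfies the Fordy–Kulish mKdV flow (1/(2N)) ∂_t q = −∂_x³ q + [q,[q, ∂_x q]] + (1/2) ∂_x([[A,q],[[A,q],q]]) if and only if 𝐪 satisfies the U(N)-invariant vector mKdV equation (1/(2N)) ∂_t 𝐪 = −∂_x³ 𝐪 − 3(𝐪̄·𝐪) ∂_x 𝐪 − 3(𝐪̄·∂_x 𝐪) 𝐪. -/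
open Matrix

attribute [local instance]
  Matrix.linftyOpNormedAddCommGroup Matrix.linftyOpNormedSpace
  Matrix.linftyOpNormedRing Matrix.linftyOpNormedAlgebra

open scoped ContDiff

/-! ### Algebraic lemmas -/

lemma commA {N : ℕ} (a : Fin N → ℂ) : ⁅Amat N, mE a⁆ = mE (Complex.I • a) := by
  have hN : ((N:ℂ) + 1) ≠ 0 := Nat.cast_add_one_ne_zero N
  ext i j
  rcases i with i | i <;> rcases j with j | j <;>
    simp [Ring.lie_def, Matrix.mul_apply, Fintype.sum_sum_type, mE, Amat,
      Matrix.one_apply, Finset.mul_sum, Finset.sum_mul, apply_ite, mul_comm] <;>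
    field_simp <;> ring

lemma commE {N : ℕ} (u w : Fin N → ℂ) :
    ⁅mE u, mE w⁆ = Matrix.fromBlocks
      (Matrix.of fun _ _ => dotc u w - dotc w u) 0 0
      (Matrix.of fun i j => (starRingEnd ℂ) (w i) * u j - (starRingEnd ℂ) (u i) * w j) := by
  ext i j
  rcases i with i | i <;> rcases j with j | j <;>
    simp [Ring.lie_def, Matrix.mul_apply, Fintype.sum_sum_type, mE, dotc,
      Finset.sum_sub_distrib, mul_comm] <;> ring

lemma doubleComm {N : ℕ} (u w : Fin N → ℂ) :
    ⁅mE u, ⁅mE u, mE w⁆⁆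
      = mE ((-(dotc u u)) • w + (2 * dotc w u - dotc u w) • u) := by
  rw [commE]
  ext i j
  rcases i with i | i <;> rcases j with j | j <;>
    simp [Ring.lie_def, Matrix.mul_apply, Fintype.sum_sum_type, mE, dotc,
      Finset.sum_sub_distrib, Finset.sum_mul, Finset.mul_sum, mul_sub, sub_mul,
      map_sum, mul_comm, mul_left_comm] <;> ring_nf <;>
    simp [Finset.sum_mul, Finset.mul_sum, map_ofNat, mul_comm, mul_left_comm,
      mul_assoc] <;> ring
  all_goals (simp only [mul_comm, mul_left_comm, mul_assoc]; simp only [mul_left_comm _ (2:ℂ), ← Finset.mul_sum]; ring)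

lemma dotc_smul_left {N : ℕ} (c : ℂ) (a b : Fin N → ℂ) :
    dotc (c • a) b = (starRingEnd ℂ) c * dotc a b := by
  simp only [dotc, Finset.mul_sum, Pi.smul_apply, smul_eq_mul, _root_.map_mul]
  exact Finset.sum_congr rfl fun k _ => by ring

lemma dotc_smul_right {N : ℕ} (c : ℂ) (a b : Fin N → ℂ) :
    dotc a (c • b) = c * dotc a b := by
  simp only [dotc, Finset.mul_sum, Pi.smul_apply, smul_eq_mul]
  exact Finset.sum_congr rfl fun k _ => by ring

lemma Aterm {N : ℕ} (a : Fin N → ℂ) :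
    ⁅⁅Amat N, mE a⁆, ⁅⁅Amat N, mE a⁆, mE a⁆⁆ = mE ((-4 * dotc a a) • a) := by
  rw [commA, doubleComm]
  refine congrArg mE ?_
  simp only [dotc_smul_left, dotc_smul_right, Complex.conj_I]
  funext k
  simp only [Pi.add_apply, Pi.smul_apply, Pi.neg_apply, smul_eq_mul]
  ring_nf
  simp [Complex.I_sq]

/-! ### The embedding as a continuous linear map -/

noncomputable def mEL (N : ℕ) :
    (Fin N → ℂ) →L[ℝ] Matrix (Fin 1 ⊕ Fin N) (Fin 1 ⊕ Fin N) ℂ :=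
  LinearMap.toContinuousLinearMap
    { toFun := mE
      map_add' := by
        intro a b
        ext i j
        rcases i with i | i <;> rcases j with j | j <;>
          simp [mE, map_add] <;> ring
      map_smul' := by
        intro r a
        ext i j
        rcases i with i | i <;> rcases j with j | j <;>
          simp [mE, Complex.real_smul, _root_.map_mul, Complex.conj_ofReal] <;> ring }

lemma mEL_apply {N : ℕ} (a : Fin N → ℂ) : mEL N a = mE a := rfl

lemma mE_real_smul {N : ℕ} (r : ℝ) (a : Fin N → ℂ) : mE (r • a) = r • mE a := by
  rw [← mEL_apply, ← mEL_apply, _root_.map_smul]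

lemma mE_neg {N : ℕ} (a : Fin N → ℂ) : mE (-a) = -(mE a) := by
  rw [← mEL_apply, ← mEL_apply, _root_.map_neg]

lemma mE_add {N : ℕ} (a b : Fin N → ℂ) : mE (a + b) = mE a + mE b := by
  rw [← mEL_apply, ← mEL_apply, ← mEL_apply, _root_.map_add]

lemma mE_inj {N : ℕ} {a b : Fin N → ℂ} (h : mE a = mE b) : a = b := by
  funext j
  have := congrFun (congrFun h (Sum.inl 0)) (Sum.inr j)
  simpa [mE] using this

lemma deriv_mE {N : ℕ} (f : ℝ → Fin N → ℂ) (x : ℝ)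
    (hf : DifferentiableAt ℝ f x) :
    deriv (fun y => mE (f y)) x = mE (deriv f x) := by
  have h := ((mEL N).hasFDerivAt.comp_hasDerivAt x hf.hasDerivAt)
  exact h.deriv

/-! ### Derivative of the cubic term -/

lemma hasDerivAt_dotc_self {N : ℕ} (g : ℝ → Fin N → ℂ) (x : ℝ) (b : Fin N → ℂ)
    (hg : HasDerivAt g b x) :
    HasDerivAt (fun y => dotc (g y) (g y)) (dotc b (g x) + dotc (g x) b) x := by
  have hk : ∀ k, HasDerivAt (fun y => g y k) (b k) x := fun k =>
    (hasDerivAt_pi.mp hg) k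
  have hmul : ∀ k, HasDerivAt (fun y => (starRingEnd ℂ) (g y k) * g y k)
      ((starRingEnd ℂ) (g x k) * b k + (starRingEnd ℂ) (b k) * g x k) x := by
    intro k
    have hstar : HasDerivAt (fun y => (starRingEnd ℂ) (g y k)) ((starRingEnd ℂ) (b k)) x := by
      have := (Complex.conjCLE.toContinuousLinearMap.hasFDerivAt.comp_hasDerivAt x (hk k))
      simpa [Complex.conjCLE_apply, Function.comp_def] using this
    have := hstar.fun_mul (hk k)
    rw [add_comm]
    exact this
  have h2 := HasDerivAt.fun_sum (fun k (_ : k ∈ Finset.univ) => hmul k)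
  have hv : (∑ k, ((starRingEnd ℂ) (g x k) * b k + (starRingEnd ℂ) (b k) * g x k))
      = dotc b (g x) + dotc (g x) b := by
    rw [dotc, dotc, ← Finset.sum_add_distrib]
    exact Finset.sum_congr rfl fun k _ => by ring
  exact hv ▸ h2

lemma hasDerivAt_cubic {N : ℕ} (g : ℝ → Fin N → ℂ) (x : ℝ) (b : Fin N → ℂ)
    (hg : HasDerivAt g b x) :
    HasDerivAt (fun y => (-4 * dotc (g y) (g y)) • g y)
      ((-4 * dotc (g x) (g x)) • b
        + (-4 * (dotc b (g x) + dotc (g x) b)) • g x) x := by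
  have h1 := (hasDerivAt_dotc_self g x b hg).const_mul (-4 : ℂ)
  exact h1.smul hg

/-! ### Main theorem -/

/-- `q = ⟦qv⟧` satisfies the Fordy–Kulish mKdV flow iff `qv`
satisfies the U(N)-invariant vector mKdV equation
`(1/(2N)) ∂_t qv = −∂_x³ qv − 3(q̄v·qv)∂_x qv − 3(q̄v·∂_x qv) qv`. -/
theorem su_vector_mKdV_correspondence {N : ℕ}
    (qv : ℝ → ℝ → Fin N → ℂ)
    (hsm : ContDiff ℝ (⊤ : ℕ∞) (fun p : ℝ × ℝ => qv p.1 p.2)) :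
    (∀ x t : ℝ,
      (1 / (2 * (N : ℝ))) • deriv (fun t' => mE (qv x t')) t
        = -(deriv (fun x' => deriv (fun x'' =>
              deriv (fun u => mE (qv u t)) x'') x') x)
          + ⁅mE (qv x t), ⁅mE (qv x t), deriv (fun x' => mE (qv x' t)) x⁆⁆
          + (1/2 : ℝ) • deriv (fun x' =>
              ⁅⁅Amat N, mE (qv x' t)⁆,
                ⁅⁅Amat N, mE (qv x' t)⁆, mE (qv x' t)⁆⁆) x)
    ↔
    (∀ x t : ℝ,
      (1 / (2 * (N : ℝ))) • deriv (fun t' => qv x t') t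
        = -(deriv (fun x' => deriv (fun x'' =>
              deriv (fun u => qv u t) x'') x') x)
          - (3 * dotc (qv x t) (qv x t)) • deriv (fun x' => qv x' t) x
          - (3 * dotc (qv x t) (deriv (fun x' => qv x' t) x)) • qv x t) := by
  have hsm' : ContDiff ℝ ∞ (fun p : ℝ × ℝ => qv p.1 p.2) := hsm.of_le (by exact_mod_cast le_top)
  have key : ∀ x t : ℝ,
      ((1 / (2 * (N : ℝ))) • deriv (fun t' => mE (qv x t')) t
        = -(deriv (fun x' => deriv (fun x'' =>
              deriv (fun u => mE (qv u t)) x'') x') x)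
          + ⁅mE (qv x t), ⁅mE (qv x t), deriv (fun x' => mE (qv x' t)) x⁆⁆
          + (1/2 : ℝ) • deriv (fun x' =>
              ⁅⁅Amat N, mE (qv x' t)⁆,
                ⁅⁅Amat N, mE (qv x' t)⁆, mE (qv x' t)⁆⁆) x)
      ↔
      ((1 / (2 * (N : ℝ))) • deriv (fun t' => qv x t') t
        = -(deriv (fun x' => deriv (fun x'' =>
              deriv (fun u => qv u t) x'') x') x)
          - (3 * dotc (qv x t) (qv x t)) • deriv (fun x' => qv x' t) x
          - (3 * dotc (qv x t) (deriv (fun x' => qv x' t) x)) • qv x t) := by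
    intro x t
    set g : ℝ → Fin N → ℂ := fun u => qv u t with hgdef
    have hg : ContDiff ℝ ∞ g :=
      hsm'.comp (contDiff_id.prodMk contDiff_const)
    have hgT : DifferentiableAt ℝ (fun t' => qv x t') t :=
      ((hsm'.comp (contDiff_const.prodMk contDiff_id)).differentiable (by simp)) t
    have hg0 : Differentiable ℝ g := hg.differentiable (by simp)
    have hg1 : ContDiff ℝ ∞ (deriv g) := (contDiff_infty_iff_deriv.mp hg).2
    have hg1d : Differentiable ℝ (deriv g) := hg1.differentiable (by simp)
    have hg2 : ContDiff ℝ ∞ (deriv (deriv g)) := (contDiff_infty_iff_deriv.mp hg1).2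
    have hg2d : Differentiable ℝ (deriv (deriv g)) := hg2.differentiable (by simp)
    -- abbreviations
    set a : Fin N → ℂ := g x with hadef
    set b : Fin N → ℂ := deriv g x with hbdef
    -- time derivative
    have eT : deriv (fun t' => mE (qv x t')) t = mE (deriv (fun t' => qv x t') t) :=
      deriv_mE _ t hgT
    -- x derivative
    have eX : deriv (fun x' => mE (qv x' t)) x = mE b :=
      deriv_mE g x (hg0 x)
    -- triple x derivative
    have e1 : (fun x'' => deriv (fun u => mE (qv u t)) x'')
        = fun x'' => mE (deriv g x'') :=
      funext fun y => deriv_mE g y (hg0 y)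
    have e2 : (fun x' => deriv (fun x'' => deriv (fun u => mE (qv u t)) x'') x')
        = fun x' => mE (deriv (deriv g) x') := by
      rw [e1]
      exact funext fun y => deriv_mE (deriv g) y (hg1d y)
    have e3 : deriv (fun x' => deriv (fun x'' =>
          deriv (fun u => mE (qv u t)) x'') x') x
        = mE (deriv (deriv (deriv g)) x) := by
      rw [e2]
      exact deriv_mE (deriv (deriv g)) x (hg2d x)
    -- cubic A-term
    have eA : (fun x' => ⁅⁅Amat N, mE (qv x' t)⁆,
          ⁅⁅Amat N, mE (qv x' t)⁆, mE (qv x' t)⁆⁆)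
        = fun x' => mE ((-4 * dotc (g x') (g x')) • g x') :=
      funext fun y => Aterm (g y)
    have hcube := hasDerivAt_cubic g x b (hg0 x).hasDerivAt
    have eAd : deriv (fun x' => ⁅⁅Amat N, mE (qv x' t)⁆,
          ⁅⁅Amat N, mE (qv x' t)⁆, mE (qv x' t)⁆⁆) x
        = mE ((-4 * dotc a a) • b + (-4 * (dotc b a + dotc a b)) • a) := by
      rw [eA, deriv_mE _ x hcube.differentiableAt, hcube.deriv]
    -- assemble the matrix equation as mE applied to vectors
    have hq : mE (qv x t) = mE a := rfl
    rw [eT, eX, e3, eAd, hq, doubleComm a b,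
      ← mE_real_smul, ← mE_neg, ← mE_real_smul, ← mE_add, ← mE_add]
    constructor
    · intro h
      have h' := mE_inj h
      rw [h']
      funext k
      simp only [Pi.add_apply, Pi.sub_apply, Pi.neg_apply, Pi.smul_apply,
        smul_eq_mul, Complex.real_smul, Complex.ofReal_div, Complex.ofReal_one,
        Complex.ofReal_ofNat]
      ring
    · intro h
      refine congrArg mE ?_
      rw [h]
      funext k
      simp only [Pi.add_apply, Pi.sub_apply, Pi.neg_apply, Pi.smul_apply,
        smul_eq_mul, Complex.real_smul, Complex.ofReal_div, Complex.ofReal_one,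
        Complex.ofReal_ofNat]
      ring
  constructor
  · intro H x t; exact (key x t).mp (H x t)
  · intro H x t; exact (key x t).mpr (H x t)
end
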